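/- arXiv:2210.09968 — 3 statements merged into one kernel-verified Lean document; each statement's English description precedes it below -/
import Mathlib

section
/- Let I = [ψ₋, ψ₊] ⊂ ℝ be a compact interval and ι : I → ℝ a bi-Lipschitz function (with constant L ≥ 1, i.e. (1/L)|ψ₁−ψ₂| ≤ |ι(ψ₁)−ι(ψ₂)| ≤ L|ψ₁−ψ₂|). For γ > 2 and M > 0, define the Diophantine set D(γ,M) = {ψ ∈ I : |m + ι(ψ)n| ≥ 1/(M·(m²+n²)^{γ/2}) for all (m,n) ∈ ℤ² \ {(0,0)}}. Then there is a constant K depending only on the length of I, L, and 1/(γ−2) such that the Lebesgue measure of I \ D(γ,M) is at most K·(M^{-1/(1+γ)} + M^{-1}). -/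
open MeasureTheory Set

/-- weight function for the summable majorant -/
noncomputable def dioGuard (k : ℤ) : ℝ := if k = 0 then 1 else |(k : ℝ)| ^ (-(3/2 : ℝ))

lemma dioGuard_pos (k : ℤ) : 0 < dioGuard k := by
  unfold dioGuard
  split
  · norm_num
  · next h =>
    apply Real.rpow_pos_of_pos
    have : (1:ℝ) ≤ |(k:ℝ)| := by
      have := Int.one_le_abs h
      calc (1:ℝ) ≤ ((|k| : ℤ) : ℝ) := by exact_mod_cast this
        _ = |(k:ℝ)| := by push_cast; ring
    linarith

lemma dioGuard_summable : Summable dioGuard := by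
  have h1 : Summable (fun k : ℤ => |(k : ℝ)| ^ (-(3/2 : ℝ))) :=
    Real.summable_abs_int_rpow (by norm_num)
  have h2 : Summable (fun k : ℤ => if k = 0 then (1:ℝ) else 0) :=
    summable_of_finite_support (by
      apply Set.Finite.subset (Set.finite_singleton (0:ℤ))
      intro k hk
      simp only [Function.mem_support] at hk
      by_contra h
      simp only [Set.mem_singleton_iff] at h
      simp [h] at hk)
  have : dioGuard = fun k : ℤ => |(k : ℝ)| ^ (-(3/2 : ℝ)) + (if k = 0 then (1:ℝ) else 0) := by
    funext k
    unfold dioGuard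
    by_cases h : k = 0
    · simp [h, Real.zero_rpow (by norm_num : -(3/2:ℝ) ≠ 0)]
    · simp [h]
  rw [this]
  exact h1.add h2

lemma one_le_abs_cast {n : ℤ} (hn : n ≠ 0) : (1:ℝ) ≤ |(n:ℝ)| := by
  have := Int.one_le_abs hn
  calc (1:ℝ) ≤ ((|n| : ℤ) : ℝ) := by exact_mod_cast this
    _ = |(n:ℝ)| := by push_cast; ring

/-- key arithmetic estimate -/
lemma dioGuard_key (m n : ℤ) (hn : n ≠ 0) (γ : ℝ) (hγ : 2 < γ) :
    (dioGuard m)⁻¹ * (dioGuard n)⁻¹ ≤ |(n:ℝ)| * (((m:ℝ)^2 + (n:ℝ)^2) ^ (γ/2)) := by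
  set a := |(m:ℝ)| with ha_def
  set b := |(n:ℝ)| with hb_def
  have hb : (1:ℝ) ≤ b := one_le_abs_cast hn
  have hb0 : (0:ℝ) < b := by linarith
  have ha0 : (0:ℝ) ≤ a := abs_nonneg _
  have hb2 : b ^ ((2:ℝ)) = (n:ℝ)^2 := by
    rw [show (2:ℝ) = ((2:ℕ):ℝ) by norm_num, Real.rpow_natCast]
    exact sq_abs _
  have hn2 : (1:ℝ) ≤ (n:ℝ)^2 := by
    rw [← hb2, ← Real.one_rpow (2:ℝ)]
    exact Real.rpow_le_rpow (by norm_num) hb (by norm_num)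
  have hsum1 : (1:ℝ) ≤ (m:ℝ)^2 + (n:ℝ)^2 := by nlinarith [sq_nonneg (m:ℝ)]
  have hinvn : (dioGuard n)⁻¹ = b ^ ((3/2:ℝ)) := by
    unfold dioGuard
    rw [if_neg hn, ← hb_def, Real.rpow_neg (le_of_lt hb0), inv_inv]
  have hmain : (dioGuard m)⁻¹ * b ^ ((1/2:ℝ)) ≤ (m:ℝ)^2 + (n:ℝ)^2 := by
    by_cases hm : m = 0
    · have : (dioGuard m)⁻¹ = 1 := by simp [dioGuard, hm]
      rw [this, one_mul]
      have : b ^ ((1/2:ℝ)) ≤ b ^ ((2:ℝ)) :=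
        Real.rpow_le_rpow_of_exponent_le hb (by norm_num)
      nlinarith [sq_nonneg (m:ℝ)]
    · have ha1 : (1:ℝ) ≤ a := one_le_abs_cast hm
      have ha0' : (0:ℝ) < a := by linarith
      have hinvm : (dioGuard m)⁻¹ = a ^ ((3/2:ℝ)) := by
        unfold dioGuard
        rw [if_neg hm, ← ha_def, Real.rpow_neg (le_of_lt ha0'), inv_inv]
      have ha2 : a ^ ((2:ℝ)) = (m:ℝ)^2 := by
        rw [show (2:ℝ) = ((2:ℕ):ℝ) by norm_num, Real.rpow_natCast]
        exact sq_abs _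
      rw [hinvm]
      rcases le_total a b with hab | hab
      · have h1 : a ^ ((3/2:ℝ)) ≤ b ^ ((3/2:ℝ)) :=
          Real.rpow_le_rpow ha0 hab (by norm_num)
        have h2 : b ^ ((3/2:ℝ)) * b ^ ((1/2:ℝ)) = b ^ ((2:ℝ)) := by
          rw [← Real.rpow_add hb0]; norm_num
        have hbp : (0:ℝ) < b ^ ((1/2:ℝ)) := Real.rpow_pos_of_pos hb0 _
        have h3 := mul_le_mul_of_nonneg_right h1 (le_of_lt hbp)
        nlinarith [sq_nonneg (m:ℝ)]
      · have h1 : b ^ ((1/2:ℝ)) ≤ a ^ ((1/2:ℝ)) :=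
          Real.rpow_le_rpow (le_of_lt hb0) hab (by norm_num)
        have h2 : a ^ ((3/2:ℝ)) * a ^ ((1/2:ℝ)) = a ^ ((2:ℝ)) := by
          rw [← Real.rpow_add ha0']; norm_num
        have hap : (0:ℝ) < a ^ ((3/2:ℝ)) := Real.rpow_pos_of_pos ha0' _
        have h3 := mul_le_mul_of_nonneg_left h1 (le_of_lt hap)
        nlinarith [sq_nonneg (n:ℝ)]
  have hsplit : b ^ ((3/2:ℝ)) = b ^ ((1/2:ℝ)) * b := by
    rw [show b ^ ((1/2:ℝ)) * b = b ^ ((1/2:ℝ)) * b ^ ((1:ℝ)) by rw [Real.rpow_one],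
      ← Real.rpow_add hb0]
    norm_num
  have hpow : (m:ℝ)^2 + (n:ℝ)^2 ≤ ((m:ℝ)^2 + (n:ℝ)^2) ^ (γ/2) := by
    nth_rewrite 1 [show (m:ℝ)^2 + (n:ℝ)^2 = ((m:ℝ)^2 + (n:ℝ)^2) ^ ((1:ℝ)) by rw [Real.rpow_one]]
    exact Real.rpow_le_rpow_of_exponent_le hsum1 (by linarith)
  have hgm : (0:ℝ) < (dioGuard m)⁻¹ := inv_pos.mpr (dioGuard_pos m)
  calc (dioGuard m)⁻¹ * (dioGuard n)⁻¹ = ((dioGuard m)⁻¹ * b ^ ((1/2:ℝ))) * b := by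
        rw [hinvn, hsplit]; ring
    _ ≤ ((m:ℝ)^2 + (n:ℝ)^2) * b := by
        apply mul_le_mul_of_nonneg_right hmain (le_of_lt hb0)
    _ ≤ (((m:ℝ)^2 + (n:ℝ)^2) ^ (γ/2)) * b := by
        apply mul_le_mul_of_nonneg_right hpow (le_of_lt hb0)
    _ = b * (((m:ℝ)^2 + (n:ℝ)^2) ^ (γ/2)) := by ring

set_option maxHeartbeats 1000000 in
/-- Measure estimate for the complement of the Diophantine set `D(γ, M)`
for a bi-Lipschitz rotational transform `ι` on `I = [ψ₋, ψ₊]`. -/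
theorem stmt_0 (ψm ψp L γ : ℝ) (hle : ψm ≤ ψp) (hL : 1 ≤ L) (hγ : 2 < γ) :
    ∃ K : ℝ, 0 < K ∧
      ∀ ι : ℝ → ℝ,
        (∀ x ∈ Icc ψm ψp, ∀ y ∈ Icc ψm ψp,
          (1 / L) * |x - y| ≤ |ι x - ι y| ∧ |ι x - ι y| ≤ L * |x - y|) →
        ∀ M : ℝ, 0 < M →
          (volume (Icc ψm ψp \
            {ψ ∈ Icc ψm ψp | ∀ m n : ℤ, (m, n) ≠ (0, 0) →
              1 / (M * (((m : ℝ) ^ 2 + (n : ℝ) ^ 2) ^ (γ / 2))) ≤ |(m : ℝ) + ι ψ * n|})).toReal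
          ≤ K * (M ^ (-(1 / (1 + γ))) + M⁻¹) := by
  classical
  set S := ∑' k : ℤ, dioGuard k with hS_def
  have hS0 : 0 ≤ S := tsum_nonneg (fun k => (dioGuard_pos k).le)
  have hL0 : (0:ℝ) < L := lt_of_lt_of_le one_pos hL
  have h2LS : (0:ℝ) ≤ 2*L*S*S := by nlinarith [mul_nonneg hS0 hS0]
  refine ⟨(ψp - ψm) + 2*L*S*S + 1, by linarith, ?_⟩
  intro ι hι M hM
  have hrpow0 : 0 ≤ M ^ (-(1 / (1 + γ))) := Real.rpow_nonneg hM.le _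
  have hMi0 : (0:ℝ) < M⁻¹ := inv_pos.mpr hM
  have hMM : M * M⁻¹ = 1 := mul_inv_cancel₀ (ne_of_gt hM)
  suffices h : (volume (Icc ψm ψp \
      {ψ ∈ Icc ψm ψp | ∀ m n : ℤ, (m, n) ≠ (0, 0) →
        1 / (M * (((m : ℝ) ^ 2 + (n : ℝ) ^ 2) ^ (γ / 2))) ≤ |(m : ℝ) + ι ψ * n|})).toReal
      ≤ ((ψp - ψm) + 2*L*S*S + 1) * M⁻¹ by
    nlinarith [mul_nonneg (show (0:ℝ) ≤ (ψp - ψm) + 2*L*S*S + 1 by linarith) hrpow0]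
  rcases lt_or_ge M 1 with hM1 | hM1
  · -- small M : the bad set is contained in the interval
    have hMi1 : (1:ℝ) ≤ M⁻¹ := by nlinarith
    have hb : (volume (Icc ψm ψp \
        {ψ ∈ Icc ψm ψp | ∀ m n : ℤ, (m, n) ≠ (0, 0) →
          1 / (M * (((m : ℝ) ^ 2 + (n : ℝ) ^ 2) ^ (γ / 2))) ≤ |(m : ℝ) + ι ψ * n|})).toReal
        ≤ ψp - ψm := by
      apply ENNReal.toReal_le_of_le_ofReal (by linarith)
      calc volume (Icc ψm ψp \ _) ≤ volume (Icc ψm ψp) := measure_mono diff_subset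
        _ = ENNReal.ofReal (ψp - ψm) := Real.volume_Icc
    nlinarith [mul_le_mul_of_nonneg_left hMi1
      (show (0:ℝ) ≤ (ψp - ψm) + 2*L*S*S + 1 by linarith)]
  · -- main case : M ≥ 1
    set E : ℤ × ℤ → Set ℝ := fun p =>
      {ψ | ψ ∈ Icc ψm ψp ∧ p.2 ≠ 0 ∧
        |(p.1:ℝ) + ι ψ * (p.2:ℝ)| < 1 / (M * (((p.1:ℝ)^2 + (p.2:ℝ)^2) ^ (γ/2)))} with hE_def
    have hcover : Icc ψm ψp \
        {ψ ∈ Icc ψm ψp | ∀ m n : ℤ, (m, n) ≠ (0, 0) →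
          1 / (M * (((m : ℝ) ^ 2 + (n : ℝ) ^ 2) ^ (γ / 2))) ≤ |(m : ℝ) + ι ψ * n|}
        ⊆ ⋃ p : ℤ × ℤ, E p := by
      rintro ψ ⟨hψI, hψD⟩
      have : ¬ (ψ ∈ Icc ψm ψp ∧ ∀ m n : ℤ, (m, n) ≠ (0, 0) →
          1 / (M * (((m : ℝ) ^ 2 + (n : ℝ) ^ 2) ^ (γ / 2))) ≤ |(m : ℝ) + ι ψ * n|) := hψD
      push_neg at this
      obtain ⟨m, n, hmn, hlt⟩ := this hψI
      have hn : n ≠ 0 := by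
        intro h0
        subst h0
        have hm : m ≠ 0 := by
          intro h; exact hmn (by rw [h])
        have h1 : (1:ℝ) ≤ |(m:ℝ)| := one_le_abs_cast hm
        have hbase : (1:ℝ) ≤ (m:ℝ)^2 + ((0:ℤ):ℝ)^2 := by
          push_cast
          nlinarith [sq_abs (m:ℝ), mul_self_nonneg (|(m:ℝ)| - 1)]
        have hr1 : (1:ℝ) ≤ ((m:ℝ)^2 + ((0:ℤ):ℝ)^2) ^ (γ/2) := by
          rw [← Real.one_rpow (γ/2)]
          exact Real.rpow_le_rpow (by norm_num) hbase (by linarith)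
        have hden : (1:ℝ) ≤ M * (((m:ℝ)^2 + ((0:ℤ):ℝ)^2) ^ (γ/2)) := by nlinarith
        have habs : |(m:ℝ) + ι ψ * ((0:ℤ):ℝ)| = |(m:ℝ)| := by push_cast; rw [mul_zero, add_zero]
        rw [habs] at hlt
        have : 1 / (M * (((m:ℝ)^2 + ((0:ℤ):ℝ)^2) ^ (γ/2))) ≤ 1 := by
          rw [div_le_one (by linarith)]; linarith
        linarith
      exact mem_iUnion.mpr ⟨(m, n), hψI, hn, hlt⟩
    have hvol : ∀ p : ℤ × ℤ,
        volume (E p) ≤ ENNReal.ofReal (2*L/M * (dioGuard p.1 * dioGuard p.2)) := by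
      rintro ⟨m, n⟩
      refine le_trans (Real.volume_le_diam _) (EMetric.diam_le ?_)
      rintro ψ₁ ⟨h1I, hn, h1⟩ ψ₂ ⟨h2I, -, h2⟩
      rw [edist_dist]
      apply ENNReal.ofReal_le_ofReal
      rw [Real.dist_eq]
      have hb1 : (1:ℝ) ≤ |(n:ℝ)| := one_le_abs_cast hn
      have hb0 : (0:ℝ) < |(n:ℝ)| := by linarith
      have hn2 : (1:ℝ) ≤ (n:ℝ)^2 := by nlinarith [sq_abs (n:ℝ)]
      have hsum1 : (1:ℝ) ≤ (m:ℝ)^2 + (n:ℝ)^2 := by nlinarith [sq_nonneg (m:ℝ)]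
      have hPpos : (0:ℝ) < ((m:ℝ)^2 + (n:ℝ)^2) ^ (γ/2) :=
        Real.rpow_pos_of_pos (by linarith) _
      have hgg : (0:ℝ) < dioGuard m * dioGuard n :=
        mul_pos (dioGuard_pos m) (dioGuard_pos n)
      have hkey := dioGuard_key m n hn γ hγ
      rw [← mul_inv] at hkey
      have hstep1 : (|(n:ℝ)| * (((m:ℝ)^2 + (n:ℝ)^2) ^ (γ/2)))⁻¹ ≤ dioGuard m * dioGuard n :=
        inv_le_of_inv_le₀ hgg hkey
      -- bound on |ι ψ₁ - ι ψ₂|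
      have hdiff : (n:ℝ) * (ι ψ₁ - ι ψ₂)
          = ((m:ℝ) + ι ψ₁ * n) - ((m:ℝ) + ι ψ₂ * n) := by ring
      have hnr : |(n:ℝ)| * |ι ψ₁ - ι ψ₂| ≤ 2 * (1 / (M * (((m:ℝ)^2 + (n:ℝ)^2) ^ (γ/2)))) := by
        rw [← abs_mul, hdiff]
        have := abs_sub ((m:ℝ) + ι ψ₁ * n) ((m:ℝ) + ι ψ₂ * n)
        linarith
      have hXpos : (0:ℝ) < M * (((m:ℝ)^2 + (n:ℝ)^2) ^ (γ/2)) := by positivity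
      have hiota : |ι ψ₁ - ι ψ₂| ≤ 2 * (M⁻¹ * (dioGuard m * dioGuard n)) := by
        have heq : 2 * (1 / (M * (((m:ℝ)^2 + (n:ℝ)^2) ^ (γ/2)))) / |(n:ℝ)|
            = 2 * (M⁻¹ * (|(n:ℝ)| * (((m:ℝ)^2 + (n:ℝ)^2) ^ (γ/2)))⁻¹) := by
          field_simp
        have h5 : |ι ψ₁ - ι ψ₂|
            ≤ 2 * (1 / (M * (((m:ℝ)^2 + (n:ℝ)^2) ^ (γ/2)))) / |(n:ℝ)| := by
          rw [le_div_iff₀ hb0]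
          nlinarith
        rw [heq] at h5
        have h6 : M⁻¹ * (|(n:ℝ)| * (((m:ℝ)^2 + (n:ℝ)^2) ^ (γ/2)))⁻¹
            ≤ M⁻¹ * (dioGuard m * dioGuard n) :=
          mul_le_mul_of_nonneg_left hstep1 (le_of_lt hMi0)
        linarith
      have hlow := (hι ψ₁ h1I ψ₂ h2I).1
      have hLL : L * (1/L) = 1 := mul_one_div_cancel (ne_of_gt hL0)
      have hA : |ψ₁ - ψ₂| ≤ L * |ι ψ₁ - ι ψ₂| := by
        have := mul_le_mul_of_nonneg_left hlow (le_of_lt hL0)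
        calc |ψ₁ - ψ₂| = L * (1/L) * |ψ₁ - ψ₂| := by rw [hLL, one_mul]
          _ = L * ((1/L) * |ψ₁ - ψ₂|) := by ring
          _ ≤ L * |ι ψ₁ - ι ψ₂| := this
      calc |ψ₁ - ψ₂| ≤ L * |ι ψ₁ - ι ψ₂| := hA
        _ ≤ L * (2 * (M⁻¹ * (dioGuard m * dioGuard n))) :=
            mul_le_mul_of_nonneg_left hiota (le_of_lt hL0)
        _ = 2*L/M * (dioGuard m * dioGuard n) := by
            field_simp
    have hofS : ∑' k : ℤ, ENNReal.ofReal (dioGuard k) = ENNReal.ofReal S := by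
      rw [hS_def, ENNReal.ofReal_tsum_of_nonneg (fun k => (dioGuard_pos k).le) dioGuard_summable]
    have hsum2 : volume (Icc ψm ψp \
        {ψ ∈ Icc ψm ψp | ∀ m n : ℤ, (m, n) ≠ (0, 0) →
          1 / (M * (((m : ℝ) ^ 2 + (n : ℝ) ^ 2) ^ (γ / 2))) ≤ |(m : ℝ) + ι ψ * n|})
        ≤ ENNReal.ofReal (2*L/M * S * S) := by
      calc volume _ ≤ volume (⋃ p : ℤ × ℤ, E p) := measure_mono hcover
        _ ≤ ∑' p : ℤ × ℤ, volume (E p) := measure_iUnion_le E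
        _ ≤ ∑' p : ℤ × ℤ, ENNReal.ofReal (2*L/M * (dioGuard p.1 * dioGuard p.2)) :=
            ENNReal.tsum_le_tsum hvol
        _ = ∑' p : ℤ × ℤ, ENNReal.ofReal (2*L/M) *
              (ENNReal.ofReal (dioGuard p.1) * ENNReal.ofReal (dioGuard p.2)) :=
            tsum_congr fun p => by
              rw [ENNReal.ofReal_mul (div_nonneg (by linarith) hM.le),
                ENNReal.ofReal_mul (dioGuard_pos p.1).le]
        _ = ENNReal.ofReal (2*L/M) *
              ∑' p : ℤ × ℤ, ENNReal.ofReal (dioGuard p.1) * ENNReal.ofReal (dioGuard p.2) :=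
            ENNReal.tsum_mul_left
        _ = ENNReal.ofReal (2*L/M) *
              ((∑' k : ℤ, ENNReal.ofReal (dioGuard k)) * (∑' k : ℤ, ENNReal.ofReal (dioGuard k))) := by
            congr 1
            rw [ENNReal.tsum_prod']
            simp_rw [ENNReal.tsum_mul_left]
            rw [ENNReal.tsum_mul_right]
        _ = ENNReal.ofReal (2*L/M * S * S) := by
            have hc0 : (0:ℝ) ≤ 2*L/M := div_nonneg (by linarith) hM.le
            rw [hofS, ← ENNReal.ofReal_mul hS0, ← ENNReal.ofReal_mul hc0, ← mul_assoc]
    have htr : (volume (Icc ψm ψp \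
        {ψ ∈ Icc ψm ψp | ∀ m n : ℤ, (m, n) ≠ (0, 0) →
          1 / (M * (((m : ℝ) ^ 2 + (n : ℝ) ^ 2) ^ (γ / 2))) ≤ |(m : ℝ) + ι ψ * n|})).toReal
        ≤ 2*L/M * S * S :=
      ENNReal.toReal_le_of_le_ofReal
        (mul_nonneg (mul_nonneg (div_nonneg (by linarith) hM.le) hS0) hS0) hsum2
    have hfin : 2*L/M * S * S ≤ ((ψp - ψm) + 2*L*S*S + 1) * M⁻¹ := by
      rw [div_eq_mul_inv]
      calc 2*L*M⁻¹ * S * S = (2*L*S*S) * M⁻¹ := by ring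
        _ ≤ ((ψp - ψm) + 2*L*S*S + 1) * M⁻¹ :=
            mul_le_mul_of_nonneg_right (by linarith) (le_of_lt hMi0)
    linarith
end

section
/- Let ι ∈ ℝ be Diophantine of exponent γ: |m + ιn| ≥ 1/(M·(m²+n²)^{γ/2}) for all nonzero (m,n) ∈ ℤ². Then for every V ∈ H^{s+γ}(𝕋²) with mean zero (V̂(0,0)=0), there exists w ∈ H^s(𝕋²) with mean zero such that (∂_φ + ι∂_θ)w = V, given by ŵ(m,n) = V̂(m,n)/(2πi(m+ιn)) for (m,n) ≠ (0,0), and ‖w‖_{H^s} ≤ C·M·‖V‖_{H^{s+γ}} for a constant C. -/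
open MeasureTheory Set

/-- Solvability of the magnetic differential equation `(∂_φ + ι ∂_θ) w = V` on a
Diophantine surface, in terms of Fourier coefficients, with loss of `γ` derivatives. -/
theorem stmt_5 (ι γ M s : ℝ) (hγ : 0 < γ) (hM : 0 < M)
    (hdio : ∀ m n : ℤ, (m, n) ≠ (0, 0) →
      1 / (M * (((m : ℝ) ^ 2 + (n : ℝ) ^ 2) ^ (γ / 2))) ≤ |(m : ℝ) + ι * n|)
    (V : ℤ × ℤ → ℂ) (hV0 : V (0, 0) = 0)
    (hVs : Summable fun p : ℤ × ℤ =>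
      (1 + ((p.1 : ℝ) ^ 2 + (p.2 : ℝ) ^ 2)) ^ (s + γ) * ‖V p‖ ^ 2) :
    ∃ (w : ℤ × ℤ → ℂ) (C : ℝ), 0 < C ∧ w (0, 0) = 0 ∧
      (∀ p : ℤ × ℤ, p ≠ (0, 0) →
        w p = V p / (2 * Real.pi * Complex.I * (((p.1 : ℝ) : ℂ) + (ι : ℂ) * (p.2 : ℝ)))) ∧
      Summable (fun p : ℤ × ℤ =>
        (1 + ((p.1 : ℝ) ^ 2 + (p.2 : ℝ) ^ 2)) ^ s * ‖w p‖ ^ 2) ∧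
      ∑' p : ℤ × ℤ, (1 + ((p.1 : ℝ) ^ 2 + (p.2 : ℝ) ^ 2)) ^ s * ‖w p‖ ^ 2
        ≤ (C * M) ^ 2 *
          ∑' p : ℤ × ℤ,
            (1 + ((p.1 : ℝ) ^ 2 + (p.2 : ℝ) ^ 2)) ^ (s + γ) * ‖V p‖ ^ 2 := by
  classical
  have hπ : (0:ℝ) < Real.pi := Real.pi_pos
  set C : ℝ := 1 / (2 * Real.pi) with hCdef
  have hC : 0 < C := by positivity
  set w : ℤ × ℤ → ℂ := fun p => if p = (0,0) then 0 else
    V p / (2 * Real.pi * Complex.I * (((p.1 : ℝ) : ℂ) + (ι : ℂ) * (p.2 : ℝ))) with hwdef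
  have key : ∀ p : ℤ × ℤ,
      (1 + ((p.1 : ℝ) ^ 2 + (p.2 : ℝ) ^ 2)) ^ s * ‖w p‖ ^ 2
      ≤ (C * M) ^ 2 *
        ((1 + ((p.1 : ℝ) ^ 2 + (p.2 : ℝ) ^ 2)) ^ (s + γ) * ‖V p‖ ^ 2) := by
    intro p
    by_cases hp : p = (0, 0)
    · subst hp
      have h0 : V 0 = 0 := hV0
      simp [hwdef, h0, hV0]
    · obtain ⟨m, n⟩ := p
      have hr : (0:ℝ) < (m : ℝ) ^ 2 + (n : ℝ) ^ 2 := by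
        rcases Prod.mk.injEq (α := ℤ) (β := ℤ) m n 0 0 ▸ hp with h
        by_cases hm : m = 0
        · have hn : n ≠ 0 := by
            intro h'; exact hp (by simp [hm, h'])
          have h1 : (1:ℤ) ≤ n ^ 2 := by
            nlinarith [Int.one_le_abs hn, abs_nonneg n, sq_abs n]
          have : (1:ℝ) ≤ (n:ℝ) ^ 2 := by exact_mod_cast h1
          nlinarith [sq_nonneg (m:ℝ)]
        · have h1 : (1:ℤ) ≤ m ^ 2 := by
            nlinarith [Int.one_le_abs hm, abs_nonneg m, sq_abs m]
          have : (1:ℝ) ≤ (m:ℝ) ^ 2 := by exact_mod_cast h1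
          nlinarith [sq_nonneg (n:ℝ)]
      set r : ℝ := (m : ℝ) ^ 2 + (n : ℝ) ^ 2 with hrdef
      have hdiop := hdio m n hp
      have hd : (0:ℝ) < |(m : ℝ) + ι * n| := lt_of_lt_of_le (by positivity) hdiop
      have hinv : 1 / |(m : ℝ) + ι * n| ≤ M * r ^ (γ / 2) := by
        rw [div_le_iff₀ hd]
        rw [div_le_iff₀ (by positivity : (0:ℝ) < M * r ^ (γ/2))] at hdiop
        linarith
      have hz : (((m : ℤ) : ℝ) : ℂ) + (ι : ℂ) * (((n : ℤ) : ℝ) : ℂ)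
          = (((m : ℝ) + ι * (n : ℝ) : ℝ) : ℂ) := by push_cast; ring
      have habs : ‖w (m, n)‖ = ‖V (m, n)‖ / (2 * Real.pi * |(m:ℝ) + ι * n|) := by
        simp only [hwdef, if_neg hp]
        rw [norm_div]
        congr 1
        rw [hz, norm_mul, norm_mul, norm_mul, Complex.norm_two, Complex.norm_I,
          Complex.norm_real, Complex.norm_real, Real.norm_eq_abs, Real.norm_eq_abs, abs_of_pos hπ, mul_one]
      have habsle : ‖w (m, n)‖ ≤ C * M * r ^ (γ/2) * ‖V (m, n)‖ := by
        rw [habs, div_eq_mul_inv, mul_comm]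
        have h1 : (2 * Real.pi * |(m:ℝ) + ι * n|)⁻¹ = C * (1 / |(m:ℝ) + ι * n|) := by
          rw [hCdef]; field_simp
        rw [h1]
        have := mul_le_mul_of_nonneg_left hinv hC.le
        calc C * (1 / |(m:ℝ) + ι * n|) * ‖V (m,n)‖
            ≤ C * (M * r ^ (γ/2)) * ‖V (m,n)‖ := by
              apply mul_le_mul_of_nonneg_right this (by positivity)
          _ = C * M * r ^ (γ/2) * ‖V (m,n)‖ := by ring
      have hsq : ‖w (m, n)‖ ^ 2 ≤ (C * M) ^ 2 * r ^ γ * ‖V (m, n)‖ ^ 2 := by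
        have h2 := mul_self_le_mul_self (norm_nonneg _) habsle
        have hrg : (r ^ (γ/2)) * (r ^ (γ/2)) = r ^ γ := by
          rw [← Real.rpow_add hr]; ring_nf
        calc ‖w (m,n)‖ ^ 2 = ‖w (m,n)‖ * ‖w (m,n)‖ := sq _
          _ ≤ (C * M * r ^ (γ/2) * ‖V (m,n)‖) * (C * M * r ^ (γ/2) * ‖V (m,n)‖) := h2
          _ = (C * M) ^ 2 * ((r ^ (γ/2)) * (r ^ (γ/2))) * ‖V (m,n)‖ ^ 2 := by ring
          _ = (C * M) ^ 2 * r ^ γ * ‖V (m,n)‖ ^ 2 := by rw [hrg]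
      have hpow : (1 + r) ^ s * r ^ γ ≤ (1 + r) ^ (s + γ) := by
        rw [Real.rpow_add (by positivity : (0:ℝ) < 1 + r)]
        apply mul_le_mul_of_nonneg_left _ (Real.rpow_nonneg (by positivity) s)
        exact Real.rpow_le_rpow hr.le (by linarith) hγ.le
      calc (1 + r) ^ s * ‖w (m,n)‖ ^ 2
          ≤ (1 + r) ^ s * ((C * M) ^ 2 * r ^ γ * ‖V (m,n)‖ ^ 2) := by
            apply mul_le_mul_of_nonneg_left hsq (Real.rpow_nonneg (by positivity) s)
        _ = (C * M) ^ 2 * (((1 + r) ^ s * r ^ γ) * ‖V (m,n)‖ ^ 2) := by ring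
        _ ≤ (C * M) ^ 2 * ((1 + r) ^ (s + γ) * ‖V (m,n)‖ ^ 2) := by
            apply mul_le_mul_of_nonneg_left _ (by positivity)
            exact mul_le_mul_of_nonneg_right hpow (by positivity)
  have hsumRHS : Summable (fun p : ℤ × ℤ => (C * M) ^ 2 *
      ((1 + ((p.1 : ℝ) ^ 2 + (p.2 : ℝ) ^ 2)) ^ (s + γ) * ‖V p‖ ^ 2)) :=
    hVs.mul_left _
  have hsumw : Summable (fun p : ℤ × ℤ =>
      (1 + ((p.1 : ℝ) ^ 2 + (p.2 : ℝ) ^ 2)) ^ s * ‖w p‖ ^ 2) := by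
    apply Summable.of_nonneg_of_le (fun p => by positivity) key hsumRHS
  refine ⟨w, C, hC, by simp [hwdef], fun p hp => by simp only [hwdef]; rw [if_neg hp], hsumw, ?_⟩
  calc ∑' p : ℤ × ℤ, (1 + ((p.1 : ℝ) ^ 2 + (p.2 : ℝ) ^ 2)) ^ s * ‖w p‖ ^ 2
      ≤ ∑' p : ℤ × ℤ, (C * M) ^ 2 *
        ((1 + ((p.1 : ℝ) ^ 2 + (p.2 : ℝ) ^ 2)) ^ (s + γ) * ‖V p‖ ^ 2) :=
        Summable.tsum_le_tsum key hsumw hsumRHS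
    _ = (C * M) ^ 2 * ∑' p : ℤ × ℤ,
        (1 + ((p.1 : ℝ) ^ 2 + (p.2 : ℝ) ^ 2)) ^ (s + γ) * ‖V p‖ ^ 2 :=
        tsum_mul_left
end

section
/- Let D ⊂ ℝ^d be a bounded domain, and let T, T₀, ρ = T − T₀ be H¹ functions with |∇T₀| ≥ λ⁻¹ > 0 pointwise (λ = ‖1/|∇T₀|‖_∞ finite). Let b be a unit vector field with ∇_b T₀ small: ‖∇_b T₀‖²_{L²} ≤ ε^{2a}·A. Define N(ε) = {x ∈ D : |∇_b T(x)|² ≥ ε|∇_b^⊥T(x)|²}. If additionally ‖∇_b ρ‖²_{L²} ≤ ε·R₁ and ‖∇_b^⊥ρ‖²_{L²} ≤ R₂, then μ(N(ε)) ≤ C·λ²·(ε^{2a−1}A + R₁ + R₂) for an absolute constant C. -/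
open MeasureTheory Set

private lemma gradient_sub' {d : ℕ} {T T₀ : EuclideanSpace ℝ (Fin d) → ℝ}
    (hT : Differentiable ℝ T) (hT₀ : Differentiable ℝ T₀) (x : EuclideanSpace ℝ (Fin d)) :
    gradient (fun y => T y - T₀ y) x = gradient T x - gradient T₀ x := by
  unfold gradient
  rw [fderiv_fun_sub (hT x) (hT₀ x), map_sub]

set_option maxHeartbeats 2000000 in
/-- The measure estimate for the "volume of non-integrability"
`N(ε) = {x ∈ D : |∇_b T|² ≥ ε |∇_b^⊥ T|²}`: if `|∇T₀| ≥ λ⁻¹`, `‖∇_b T₀‖² ≤ ε^{2a} A`,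
`‖∇_b ρ‖² ≤ ε R₁` and `‖∇_b^⊥ ρ‖² ≤ R₂` for `ρ = T − T₀`, then
`μ(N(ε)) ≤ C λ² (ε^{2a−1} A + R₁ + R₂)` for an absolute constant `C`. -/
theorem stmt_19 :
    ∃ C : ℝ, 0 < C ∧
      ∀ (d : ℕ) (D : Set (EuclideanSpace ℝ (Fin d))),
        MeasurableSet D → Bornology.IsBounded D →
      ∀ (T T₀ : EuclideanSpace ℝ (Fin d) → ℝ)
        (b : EuclideanSpace ℝ (Fin d) → EuclideanSpace ℝ (Fin d))
        (lam ε a A R₁ R₂ : ℝ),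
        Differentiable ℝ T → Differentiable ℝ T₀ →
        (∀ x, ‖b x‖ = 1) →
        0 < lam → (∀ x ∈ D, lam⁻¹ ≤ ‖gradient T₀ x‖) →
        0 < ε → ε ≤ 1 → (1 : ℝ) / 2 ≤ a →
        0 ≤ A → 0 ≤ R₁ → 0 ≤ R₂ →
        IntegrableOn (fun x => (inner ℝ (b x) (gradient T₀ x) : ℝ) ^ 2) D →
        IntegrableOn (fun x => (inner ℝ (b x) (gradient (fun y => T y - T₀ y) x) : ℝ) ^ 2) D →
        IntegrableOn (fun x =>
          ‖gradient (fun y => T y - T₀ y) x -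
            (inner ℝ (b x) (gradient (fun y => T y - T₀ y) x) : ℝ) • b x‖ ^ 2) D →
        (∫ x in D, (inner ℝ (b x) (gradient T₀ x) : ℝ) ^ 2) ≤ ε ^ (2 * a) * A →
        (∫ x in D, (inner ℝ (b x) (gradient (fun y => T y - T₀ y) x) : ℝ) ^ 2) ≤ ε * R₁ →
        (∫ x in D,
          ‖gradient (fun y => T y - T₀ y) x -
            (inner ℝ (b x) (gradient (fun y => T y - T₀ y) x) : ℝ) • b x‖ ^ 2) ≤ R₂ →
        (volume {x ∈ D |
            ε * ‖gradient T x - (inner ℝ (b x) (gradient T x) : ℝ) • b x‖ ^ 2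
              ≤ (inner ℝ (b x) (gradient T x) : ℝ) ^ 2}).toReal
          ≤ C * lam ^ 2 * (ε ^ (2 * a - 1) * A + R₁ + R₂) := by
  refine ⟨9, by norm_num, ?_⟩
  intro d D hDmeas hDbdd T T₀ b lam ε a A R₁ R₂ hT hT₀ hb hlam hlow hε hε1 ha hA hR₁ hR₂
    hint₀ hint₁ hint₂ hI₀ hI₁ hI₂
  set μ := (volume : Measure (EuclideanSpace ℝ (Fin d)))
  -- notation
  set f₀ : EuclideanSpace ℝ (Fin d) → ℝ :=
    fun x => (inner ℝ (b x) (gradient T₀ x) : ℝ) ^ 2 with hf₀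
  set f₁ : EuclideanSpace ℝ (Fin d) → ℝ :=
    fun x => (inner ℝ (b x) (gradient (fun y => T y - T₀ y) x) : ℝ) ^ 2 with hf₁
  set f₂ : EuclideanSpace ℝ (Fin d) → ℝ :=
    fun x => ‖gradient (fun y => T y - T₀ y) x -
      (inner ℝ (b x) (gradient (fun y => T y - T₀ y) x) : ℝ) • b x‖ ^ 2 with hf₂
  set g : EuclideanSpace ℝ (Fin d) → ℝ :=
    fun x => (9 / ε) * f₀ x + (6 / ε) * f₁ x + 3 * f₂ x with hg
  have hgint : Integrable g (μ.restrict D) := by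
    exact ((hint₀.const_mul _).add (hint₁.const_mul _)).add (hint₂.const_mul _)
  have hgnn : ∀ x, 0 ≤ g x := by
    intro x
    have h0 : 0 ≤ f₀ x := sq_nonneg _
    have h1 : 0 ≤ f₁ x := sq_nonneg _
    have h2 : 0 ≤ f₂ x := by positivity
    have hε' : (0:ℝ) ≤ 9 / ε := by positivity
    have hε'' : (0:ℝ) ≤ 6 / ε := by positivity
    show 0 ≤ 9 / ε * f₀ x + 6 / ε * f₁ x + 3 * f₂ x
    have := mul_nonneg hε' h0
    have := mul_nonneg hε'' h1
    linarith
  set N : Set (EuclideanSpace ℝ (Fin d)) := {x ∈ D |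
      ε * ‖gradient T x - (inner ℝ (b x) (gradient T x) : ℝ) • b x‖ ^ 2
        ≤ (inner ℝ (b x) (gradient T x) : ℝ) ^ 2} with hN
  -- pointwise bound on N : lam⁻² ≤ g x
  have key : ∀ x ∈ N, lam⁻¹ ^ 2 ≤ g x := by
    rintro x ⟨hxD, hxN⟩
    set β := b x with hβdef
    have hβ : ‖β‖ = 1 := hb x
    set u := gradient T x with hudef
    set u₀ := gradient T₀ x with hu₀def
    set r := gradient (fun y => T y - T₀ y) x with hr
    have hru : r = u - u₀ := gradient_sub' hT hT₀ x
    set c := (inner ℝ β u : ℝ) with hcdef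
    set c₀ := (inner ℝ β u₀ : ℝ) with hc₀def
    set cr := (inner ℝ β r : ℝ) with hcrdef
    have hcsum : c = c₀ + cr := by
      have : (inner ℝ β (u₀ + r) : ℝ) = c₀ + cr := inner_add_right β u₀ r
      rw [hcdef, show u = u₀ + r by rw [hru]; abel, this]
    set Pu := u - c • β with hPu
    set Pr := r - cr • β with hPr
    have hPdec : u₀ - c₀ • β = Pu - Pr := by
      rw [hPu, hPr, hru, hcsum]; module
    have h1 : ‖u₀‖ ≤ ‖Pu‖ + ‖Pr‖ + |c₀| := by
      have hd : u₀ = (Pu - Pr) + c₀ • β := by rw [← hPdec]; module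
      calc ‖u₀‖ = ‖(Pu - Pr) + c₀ • β‖ := by rw [← hd]
        _ ≤ ‖Pu - Pr‖ + ‖c₀ • β‖ := norm_add_le _ _
        _ ≤ (‖Pu‖ + ‖Pr‖) + |c₀| := by
            gcongr
            · exact norm_sub_le _ _
            · rw [norm_smul, hβ, Real.norm_eq_abs, mul_one]
    have hlow' : lam⁻¹ ≤ ‖u₀‖ := hlow x hxD
    have hlam' : (0:ℝ) ≤ lam⁻¹ := by positivity
    have h2 : lam⁻¹ ^ 2 ≤ (‖Pu‖ + ‖Pr‖ + |c₀|) ^ 2 :=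
      pow_le_pow_left₀ hlam' (hlow'.trans h1) 2
    have h3 : (‖Pu‖ + ‖Pr‖ + |c₀|) ^ 2 ≤ 3 * (‖Pu‖ ^ 2 + ‖Pr‖ ^ 2 + c₀ ^ 2) := by
      nlinarith [sq_nonneg (‖Pu‖ - ‖Pr‖), sq_nonneg (‖Pu‖ - |c₀|), sq_nonneg (‖Pr‖ - |c₀|),
        sq_abs c₀]
    have hxN' : ε * ‖Pu‖ ^ 2 ≤ c ^ 2 := hxN
    have h4 : ‖Pu‖ ^ 2 ≤ ε⁻¹ * c ^ 2 := by
      rw [inv_mul_eq_div, le_div_iff₀ hε]; linarith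
    have h5 : c ^ 2 ≤ 2 * c₀ ^ 2 + 2 * cr ^ 2 := by
      rw [hcsum]; nlinarith [sq_nonneg (c₀ - cr)]
    have hεinv : (0:ℝ) < ε⁻¹ := by positivity
    have h1ε : (1:ℝ) ≤ ε⁻¹ := by
      nlinarith [mul_inv_cancel₀ hε.ne']
    have h4' : ‖Pu‖ ^ 2 ≤ ε⁻¹ * (2 * c₀ ^ 2 + 2 * cr ^ 2) :=
      h4.trans (mul_le_mul_of_nonneg_left h5 hεinv.le)
    have hmain : lam⁻¹ ^ 2 ≤ 3 * (ε⁻¹ * (2 * c₀ ^ 2 + 2 * cr ^ 2) + ‖Pr‖ ^ 2 + c₀ ^ 2) := by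
      nlinarith
    have hgx : g x = 9 / ε * c₀ ^ 2 + 6 / ε * cr ^ 2 + 3 * ‖Pr‖ ^ 2 := rfl
    rw [hgx]
    have hextra : 0 ≤ (ε⁻¹ - 1) * c₀ ^ 2 :=
      mul_nonneg (by linarith) (sq_nonneg c₀)
    have hdiv9 : 9 / ε = 9 * ε⁻¹ := by ring
    have hdiv6 : 6 / ε = 6 * ε⁻¹ := by ring
    rw [hdiv9, hdiv6]
    nlinarith [hmain, hextra]
  -- Markov
  have hμD : μ D ≠ ⊤ := (hDbdd.measure_lt_top).ne
  have hrestr : IsFiniteMeasure (μ.restrict D) := by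
    constructor
    rw [Measure.restrict_apply_univ]
    exact hμD.lt_top
  have markov := mul_meas_ge_le_integral_of_nonneg
    (ae_of_all _ hgnn) hgint (lam⁻¹ ^ 2)
  -- μ N ≤ (μ.restrict D) {x | lam⁻¹^2 ≤ g x}
  have hNsub : μ N ≤ (μ.restrict D) {x | lam⁻¹ ^ 2 ≤ g x} := by
    rw [Measure.restrict_apply' hDmeas]
    apply measure_mono
    intro x hx
    exact ⟨key x hx, hx.1⟩
  have hfin : (μ.restrict D) {x | lam⁻¹ ^ 2 ≤ g x} ≠ ⊤ :=
    (measure_lt_top _ _).ne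
  have htoReal : (μ N).toReal ≤ ((μ.restrict D) {x | lam⁻¹ ^ 2 ≤ g x}).toReal :=
    ENNReal.toReal_mono hfin hNsub
  -- integral bound
  have hintg : ∫ x in D, g x ∂μ ≤ 9 * (ε ^ (2 * a - 1) * A + R₁ + R₂) := by
    have i0 : Integrable (fun x => (9 / ε) * f₀ x) (μ.restrict D) := hint₀.const_mul _
    have i1 : Integrable (fun x => (6 / ε) * f₁ x) (μ.restrict D) := hint₁.const_mul _
    have i2 : Integrable (fun x => 3 * f₂ x) (μ.restrict D) := hint₂.const_mul _
    have i01 : Integrable (fun x => (9 / ε) * f₀ x + (6 / ε) * f₁ x) (μ.restrict D) := i0.add i1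
    have hsplit : ∫ x in D, g x ∂μ
        = (9 / ε) * ∫ x in D, f₀ x ∂μ + (6 / ε) * ∫ x in D, f₁ x ∂μ
          + 3 * ∫ x in D, f₂ x ∂μ := by
      calc ∫ x in D, g x ∂μ
          = ∫ x in D, ((9 / ε) * f₀ x + (6 / ε) * f₁ x) + 3 * f₂ x ∂μ := rfl
        _ = (∫ x in D, (9 / ε) * f₀ x + (6 / ε) * f₁ x ∂μ) + ∫ x in D, 3 * f₂ x ∂μ :=
            integral_add i01 i2
        _ = ((∫ x in D, (9 / ε) * f₀ x ∂μ) + ∫ x in D, (6 / ε) * f₁ x ∂μ)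
              + ∫ x in D, 3 * f₂ x ∂μ := by rw [integral_add i0 i1]
        _ = (9 / ε) * ∫ x in D, f₀ x ∂μ + (6 / ε) * ∫ x in D, f₁ x ∂μ
              + 3 * ∫ x in D, f₂ x ∂μ := by
            rw [integral_const_mul, integral_const_mul, integral_const_mul]
    rw [hsplit]
    have h9 : (0:ℝ) ≤ 9 / ε := by positivity
    have h6 : (0:ℝ) ≤ 6 / ε := by positivity
    have t0 : (9 / ε) * ∫ x in D, f₀ x ∂μ ≤ (9 / ε) * (ε ^ (2 * a) * A) :=
      mul_le_mul_of_nonneg_left hI₀ h9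
    have t1 : (6 / ε) * ∫ x in D, f₁ x ∂μ ≤ (6 / ε) * (ε * R₁) :=
      mul_le_mul_of_nonneg_left hI₁ h6
    have t2 : 3 * ∫ x in D, f₂ x ∂μ ≤ 3 * R₂ := by linarith [hI₂]
    have e0 : (9 / ε) * (ε ^ (2 * a) * A) = 9 * (ε ^ (2 * a - 1) * A) := by
      rw [Real.rpow_sub hε, Real.rpow_one]
      field_simp
    have e1 : (6 / ε) * (ε * R₁) = 6 * R₁ := by field_simp
    have hε2a : (0:ℝ) ≤ ε ^ (2 * a - 1) := (Real.rpow_pos_of_pos hε _).le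
    have hnn : 0 ≤ ε ^ (2 * a - 1) * A := mul_nonneg hε2a hA
    linarith [t0, t1, t2]
  -- finish
  have hlamne : lam⁻¹ ^ 2 > 0 := by positivity
  have hNg : (μ N).toReal * lam⁻¹ ^ 2 ≤ ∫ x in D, g x ∂μ := by
    calc (μ N).toReal * lam⁻¹ ^ 2
        ≤ ((μ.restrict D) {x | lam⁻¹ ^ 2 ≤ g x}).toReal * lam⁻¹ ^ 2 := by
          exact mul_le_mul_of_nonneg_right htoReal hlamne.le
      _ = lam⁻¹ ^ 2 * ((μ.restrict D) {x | lam⁻¹ ^ 2 ≤ g x}).toReal := by ring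
      _ ≤ ∫ x in D, g x ∂μ := markov
  have hfinal : (μ N).toReal ≤ lam ^ 2 * ∫ x in D, g x ∂μ := by
    have : (μ N).toReal = lam ^ 2 * ((μ N).toReal * lam⁻¹ ^ 2) := by
      field_simp
    rw [this]
    have hgnn' : 0 ≤ ∫ x in D, g x ∂μ := integral_nonneg hgnn
    exact mul_le_mul_of_nonneg_left hNg (by positivity)
  calc (μ N).toReal ≤ lam ^ 2 * ∫ x in D, g x ∂μ := hfinal
    _ ≤ lam ^ 2 * (9 * (ε ^ (2 * a - 1) * A + R₁ + R₂)) :=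
        mul_le_mul_of_nonneg_left hintg (by positivity)
    _ = 9 * lam ^ 2 * (ε ^ (2 * a - 1) * A + R₁ + R₂) := by ring
end
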